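/- Bilinear form of additive product rules: Let P be a product rule satisfying left additivity P(x+y, ẋ+ẏ, z, ż) ≈ P(x,ẋ,z,ż) + P(y,ẏ,z,ż) and right additivity P(x, ẋ, y+z, ẏ+ż) ≈ P(x,ẋ,y,ẏ) + P(x,ẋ,z,ż). Then there exist rationals α, β₁, β₂, γ ∈ ℚ such that P ≈ α·(x*y) + β₁·(x*ẏ) + β₂·(ẋ*y) + γ·(ẋ*ẏ). -/
import Mathlib


namespace PSeries

/-- A (formal power) series over alphabet `A` with rational coefficients. -/
abbrev Series (A : Type) : Type := List A → ℚ

/-- Left derivative of a series by a letter. -/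
def deriv {A : Type} (a : A) (f : Series A) : Series A := fun w => f (a :: w)

/-- Right derivative of a series by a letter. -/
def derivR {A : Type} (b : A) (f : Series A) : Series A := fun w => f (w ++ [b])

/-- Reversal of a series. -/
def rev {A : Type} (f : Series A) : Series A := fun w => f w.reverse

/-- Terms over a set of variables `X`:  `u ::= x | 0 | c·u | u + v | u * v`. -/
inductive Term (X : Type) : Type
  | var : X → Term X
  | zero : Term X
  | smul : ℚ → Term X → Term X
  | add : Term X → Term X → Term X
  | mul : Term X → Term X → Term X

namespace Term

/-- Simultaneous substitution of terms for variables. -/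
def subst {X Y : Type} : Term X → (X → Term Y) → Term Y
  | var x, ρ => ρ x
  | zero, _ => zero
  | smul c u, ρ => smul c (u.subst ρ)
  | add u v, ρ => add (u.subst ρ) (v.subst ρ)
  | mul u v, ρ => mul (u.subst ρ) (v.subst ρ)

/-- Semantics of a term on series, with the product symbol interpreted by `m`. -/
def evalS {A X : Type} (m : Series A → Series A → Series A) :
    Term X → (X → Series A) → Series A
  | var x, ρ => ρ x
  | zero, _ => 0
  | smul c u, ρ => c • u.evalS m ρ
  | add u v, ρ => u.evalS m ρ + v.evalS m ρ
  | mul u v, ρ => m (u.evalS m ρ) (v.evalS m ρ)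

/-- Evaluation of a term in the rationals (product is rational multiplication). -/
def evalQ {X : Type} : Term X → (X → ℚ) → ℚ
  | var x, F => F x
  | zero, _ => 0
  | smul c u, F => c * u.evalQ F
  | add u v, F => u.evalQ F + v.evalQ F
  | mul u v, F => u.evalQ F * v.evalQ F

/-- Evaluation of a term in a commutative `ℚ`-algebra. -/
def evalA {R : Type} [CommRing R] [Algebra ℚ R] {X : Type} :
    Term X → (X → R) → R
  | var x, ρ => ρ x
  | zero, _ => 0
  | smul c u, ρ => c • u.evalA ρ
  | add u v, ρ => u.evalA ρ + v.evalA ρ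
  | mul u v, ρ => u.evalA ρ * v.evalA ρ

end Term

/-- `m` is the `P`-product for the product rule `P`; that is, `m` satisfies the
two defining equations `(f*g)(ε) = f(ε)·g(ε)` and `δ_a (f*g) = P(f, δ_a f, g, δ_a g)`. -/
def IsPProduct {A : Type} (P : Term (Fin 4)) (m : Series A → Series A → Series A) : Prop :=
  (∀ f g : Series A, m f g [] = f [] * g []) ∧
  (∀ (f g : Series A) (a : A),
    deriv a (m f g) = P.evalS m ![f, deriv a f, g, deriv a g])

/-- The smallest congruence on terms generated by the axioms of
commutative (not necessarily unital) `ℚ`-algebras. -/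
inductive TEq {X : Type} : Term X → Term X → Prop
  | refl (u : Term X) : TEq u u
  | symm {u v : Term X} : TEq u v → TEq v u
  | trans {u v w : Term X} : TEq u v → TEq v w → TEq u w
  | smul_congr (c : ℚ) {u v : Term X} : TEq u v → TEq (.smul c u) (.smul c v)
  | add_congr {u u' v v' : Term X} : TEq u u' → TEq v v' → TEq (.add u v) (.add u' v')
  | mul_congr {u u' v v' : Term X} : TEq u u' → TEq v v' → TEq (.mul u v) (.mul u' v')
  | one_smul (u : Term X) : TEq (.smul 1 u) u
  | smul_smul (c d : ℚ) (u : Term X) : TEq (.smul c (.smul d u)) (.smul (c * d) u)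
  | add_smul (c d : ℚ) (u : Term X) : TEq (.smul (c + d) u) (.add (.smul c u) (.smul d u))
  | smul_add (c : ℚ) (u v : Term X) : TEq (.smul c (.add u v)) (.add (.smul c u) (.smul c v))
  | add_zero (u : Term X) : TEq (.add u .zero) u
  | add_assoc (u v w : Term X) : TEq (.add (.add u v) w) (.add u (.add v w))
  | add_comm (u v : Term X) : TEq (.add u v) (.add v u)
  | neg_cancel (u : Term X) : TEq (.add u (.smul (-1) u)) .zero
  | mul_addl (u v w : Term X) : TEq (.mul (.add u v) w) (.add (.mul u w) (.mul v w))
  | mul_smull (c : ℚ) (u v : Term X) : TEq (.mul (.smul c u) v) (.smul c (.mul u v))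
  | mul_assoc (u v w : Term X) : TEq (.mul (.mul u v) w) (.mul u (.mul v w))
  | mul_comm (u v : Term X) : TEq (.mul u v) (.mul v u)

/-- A product rule `P` (a term over the variables `x = 0, ẋ = 1, y = 2, ẏ = 3`)
is special: it satisfies (P-add), (P-assoc) and (P-comm) up to the congruence `TEq`.
In the first two equations the six variables are `x = 0, ẋ = 1, y = 2, ẏ = 3, z = 4, ż = 5`. -/
def Special (P : Term (Fin 4)) : Prop :=
  TEq (P.subst (![.add (.var 0) (.var 2), .add (.var 1) (.var 3), .var 4, .var 5] :
        Fin 4 → Term (Fin 6)))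
      (.add (P.subst (![.var 0, .var 1, .var 4, .var 5] : Fin 4 → Term (Fin 6)))
            (P.subst (![.var 2, .var 3, .var 4, .var 5] : Fin 4 → Term (Fin 6)))) ∧
  TEq (P.subst (![.var 0, .var 1, .mul (.var 2) (.var 4),
        P.subst (![.var 2, .var 3, .var 4, .var 5] : Fin 4 → Term (Fin 6))] :
        Fin 4 → Term (Fin 6)))
      (P.subst (![.mul (.var 0) (.var 2),
        P.subst (![.var 0, .var 1, .var 2, .var 3] : Fin 4 → Term (Fin 6)), .var 4, .var 5] :
        Fin 4 → Term (Fin 6))) ∧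
  TEq P (P.subst (![.var 2, .var 3, .var 0, .var 1] : Fin 4 → Term (Fin 4)))

/-- A binary operation on series is bilinear, associative and commutative. -/
def IsBAC {A : Type} (m : Series A → Series A → Series A) : Prop :=
  (∀ f g h : Series A, m (f + g) h = m f h + m g h) ∧
  (∀ (c : ℚ) (f g : Series A), m (c • f) g = c • m f g) ∧
  (∀ f g h : Series A, m f (g + h) = m f g + m f h) ∧
  (∀ (c : ℚ) (f g : Series A), m f (c • g) = c • m f g) ∧
  (∀ f g h : Series A, m (m f g) h = m f (m g h)) ∧
  (∀ f g : Series A, m f g = m g f)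

/-- The smallest set of series containing `0` and the generators `G`, closed under
scalar multiplication, addition, and the product `m`. -/
inductive InAlg {A : Type} (m : Series A → Series A → Series A) (G : Set (Series A)) :
    Series A → Prop
  | zero : InAlg m G 0
  | gen {g : Series A} : g ∈ G → InAlg m G g
  | smul (c : ℚ) {f : Series A} : InAlg m G f → InAlg m G (c • f)
  | add {f g : Series A} : InAlg m G f → InAlg m G g → InAlg m G (f + g)
  | mul {f g : Series A} : InAlg m G f → InAlg m G g → InAlg m G (m f g)

/-- `f` is `P`-finite (w.r.t. the `P`-product `m`): there are finitely many generators
`g 0 = f, g 1, …` all of whose left derivatives lie in the algebra they generate. -/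
def PFinite {A : Type} (m : Series A → Series A → Series A) (f : Series A) : Prop :=
  ∃ (k : ℕ) (g : Fin (k + 1) → Series A),
    g 0 = f ∧ ∀ (i : Fin (k + 1)) (a : A), InAlg m (Set.range g) (deriv a (g i))

/-- A `P`-automaton: output function `out` and transition function `tr`. -/
structure PAutomaton (A X : Type) where
  out : X → ℚ
  tr : A → X → Term X

/-- The `P`-extension of a function `D : X → Term X` to all terms. -/
def pext {X : Type} (P : Term (Fin 4)) (D : X → Term X) : Term X → Term X
  | .var x => D x
  | .zero => .zero
  | .smul c u => .smul c (pext P D u)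
  | .add u v => .add (pext P D u) (pext P D v)
  | .mul u v => P.subst ![u, pext P D u, v, pext P D v]

/-- Homomorphic extension of the output function of a `P`-automaton to all terms. -/
def PAutomaton.outT {A X : Type} (𝒜 : PAutomaton A X) (u : Term X) : ℚ :=
  u.evalQ 𝒜.out

/-- Extension of the (`P`-extended) transition function of a `P`-automaton to words. -/
def trWord {A X : Type} (P : Term (Fin 4)) (𝒜 : PAutomaton A X) :
    List A → Term X → Term X
  | [], u => u
  | a :: w, u => trWord P 𝒜 w (pext P (𝒜.tr a) u)

/-- The semantics of a `P`-automaton: the unique map with `⟦α⟧(ε) = F(α)` and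
`δ_a ⟦α⟧ = ⟦Δ̃_a α⟧`; concretely, `⟦α⟧(w) = F(Δ̃_w α)`. -/
def asem {A X : Type} (P : Term (Fin 4)) (𝒜 : PAutomaton A X) (u : Term X) : Series A :=
  fun w => (trWord P 𝒜 w u).evalQ 𝒜.out

/-- `ℚ[X]⁰`: polynomials in commuting variables `X` with zero constant term. -/
noncomputable def Aug (X : Type) : Submodule ℚ (MvPolynomial X ℚ) where
  carrier := {p | MvPolynomial.coeff 0 p = 0}
  add_mem' := by
    intro a b ha hb
    simp only [Set.mem_setOf_eq, MvPolynomial.coeff_add] at *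
    rw [ha, hb, add_zero]
  zero_mem' := by simp
  smul_mem' := by
    intro c p hp
    simp only [Set.mem_setOf_eq, MvPolynomial.coeff_smul] at *
    rw [hp, smul_zero]

/-- The variable `x` as an element of `ℚ[X]⁰`. -/
noncomputable def Aug.var {X : Type} (x : X) : Aug X :=
  ⟨MvPolynomial.X x, by
    show MvPolynomial.coeff 0 (MvPolynomial.X x) = 0
    simp [MvPolynomial.coeff_X']⟩

/-- The product of two elements of `ℚ[X]⁰`, again in `ℚ[X]⁰`. -/
noncomputable def Aug.mul {X : Type} (p q : Aug X) : Aug X :=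
  ⟨(p : MvPolynomial X ℚ) * (q : MvPolynomial X ℚ), by
    show MvPolynomial.coeff 0 _ = 0
    have hp : MvPolynomial.constantCoeff (p : MvPolynomial X ℚ) = 0 := p.2
    have hq : MvPolynomial.constantCoeff (q : MvPolynomial X ℚ) = 0 := q.2
    have := map_mul MvPolynomial.constantCoeff (p : MvPolynomial X ℚ) (q : MvPolynomial X ℚ)
    simpa [MvPolynomial.constantCoeff_eq, hp, hq] using this⟩

/-- A polynomial `P`-automaton over variables `X`. -/
structure PolyAutomaton (A X : Type) where
  out : X → ℚ
  tr : A → X → Aug X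

/-- Extension to words of a family of (extended) transition maps on `ℚ[X]⁰`. -/
noncomputable def trWordP {A X : Type} (Dt : A → (Aug X →ₗ[ℚ] Aug X)) : List A → Aug X → Aug X
  | [], p => p
  | a :: w, p => trWordP Dt w (Dt a p)

/-- The ideal of `ℚ[X]` generated by all polynomials reachable from the initial
variable `x1` by words of length at most `n`. -/
noncomputable def reachIdeal {A X : Type} (Dt : A → (Aug X →ₗ[ℚ] Aug X)) (x1 : X) (n : ℕ) :
    Ideal (MvPolynomial X ℚ) :=
  Ideal.span {p : MvPolynomial X ℚ |
    ∃ w : List A, w.length ≤ n ∧ p = ((trWordP Dt w (Aug.var x1) : Aug X) : MvPolynomial X ℚ)}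


section Completeness

variable {X : Type}

theorem TEq.evalA_eq {R : Type} [CommRing R] [Algebra ℚ R] {u v : Term X} (h : TEq u v)
    (ρ : X → R) : u.evalA ρ = v.evalA ρ := by
  induction h with
  | refl u => rfl
  | symm _ ih => exact ih.symm
  | trans _ _ ih1 ih2 => exact ih1.trans ih2
  | smul_congr c _ ih => simp [Term.evalA, ih]
  | add_congr _ _ ih1 ih2 => simp [Term.evalA, ih1, ih2]
  | mul_congr _ _ ih1 ih2 => simp [Term.evalA, ih1, ih2]
  | one_smul u => simp [Term.evalA]
  | smul_smul c d u => simp [Term.evalA, _root_.smul_smul]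
  | add_smul c d u => simp [Term.evalA, _root_.add_smul]
  | smul_add c u v => simp [Term.evalA, _root_.smul_add]
  | add_zero u => simp [Term.evalA]
  | add_assoc u v w => simp [Term.evalA, _root_.add_assoc]
  | add_comm u v => simp [Term.evalA, _root_.add_comm]
  | neg_cancel u => simp [Term.evalA, neg_one_smul]
  | mul_addl u v w => simp [Term.evalA, _root_.add_mul]
  | mul_smull c u v => simp [Term.evalA, smul_mul_assoc]
  | mul_assoc u v w => simp [Term.evalA, _root_.mul_assoc]
  | mul_comm u v => simp [Term.evalA, _root_.mul_comm]

instance termSetoid (X : Type) : Setoid (Term X) :=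
  ⟨TEq, ⟨TEq.refl, TEq.symm, TEq.trans⟩⟩

/-- The quotient of terms by the congruence `TEq`. -/
def TQ (X : Type) : Type := Quotient (termSetoid X)

/-- Class of a term in the quotient. -/
def tmk (u : Term X) : TQ X := Quotient.mk _ u

instance : Zero (TQ X) := ⟨tmk .zero⟩
instance : Add (TQ X) :=
  ⟨Quotient.map₂ .add fun _ _ h _ _ h' => TEq.add_congr h h'⟩
instance : Mul (TQ X) :=
  ⟨Quotient.map₂ .mul fun _ _ h _ _ h' => TEq.mul_congr h h'⟩
instance : SMul ℚ (TQ X) :=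
  ⟨fun c => Quotient.map (.smul c) fun _ _ h => TEq.smul_congr c h⟩
instance : Neg (TQ X) := ⟨fun q => (-1 : ℚ) • q⟩

theorem tmk_sound {u v : Term X} (h : TEq u v) : tmk u = tmk v := Quotient.sound h

@[simp] theorem tmk_add (u v : Term X) : tmk u + tmk v = tmk (.add u v) := rfl
@[simp] theorem tmk_mul (u v : Term X) : tmk u * tmk v = tmk (.mul u v) := rfl
@[simp] theorem tmk_smul (c : ℚ) (u : Term X) : c • tmk u = tmk (.smul c u) := rfl
@[simp] theorem tmk_zero : (0 : TQ X) = tmk .zero := rfl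

instance : AddCommGroup (TQ X) where
  nsmul := nsmulRec
  zsmul := zsmulRec
  add_assoc a b c := by
    refine Quotient.inductionOn₃ a b c fun u v w => ?_
    exact tmk_sound (TEq.add_assoc u v w)
  zero_add a := by
    refine Quotient.inductionOn a fun u => ?_
    exact tmk_sound ((TEq.add_comm _ u).trans (TEq.add_zero u))
  add_zero a := by
    refine Quotient.inductionOn a fun u => ?_
    exact tmk_sound (TEq.add_zero u)
  add_comm a b := by
    refine Quotient.inductionOn₂ a b fun u v => ?_
    exact tmk_sound (TEq.add_comm u v)
  neg_add_cancel a := by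
    refine Quotient.inductionOn a fun u => ?_
    exact tmk_sound ((TEq.add_comm _ u).trans (TEq.neg_cancel u))

instance : Module ℚ (TQ X) where
  one_smul a := by
    refine Quotient.inductionOn a fun u => ?_
    exact tmk_sound (TEq.one_smul u)
  mul_smul c d a := by
    refine Quotient.inductionOn a fun u => ?_
    exact (tmk_sound (TEq.smul_smul c d u)).symm
  smul_add c a b := by
    refine Quotient.inductionOn₂ a b fun u v => ?_
    exact tmk_sound (TEq.smul_add c u v)
  add_smul c d a := by
    refine Quotient.inductionOn a fun u => ?_
    exact tmk_sound (TEq.add_smul c d u)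
  smul_zero c := by
    have e : (c • (0 : TQ X)) + (c • (0 : TQ X)) = (c • (0 : TQ X)) + 0 := by
      rw [add_zero]
      exact (tmk_sound ((TEq.smul_congr c (TEq.add_zero .zero).symm).trans
        (TEq.smul_add c .zero .zero))).symm
    exact add_left_cancel e
  zero_smul a := by
    refine Quotient.inductionOn a fun u => ?_
    have e0 : TEq (Term.smul (0:ℚ) u) (.add (.smul 0 u) (.smul 0 u)) := by
      have h := TEq.add_smul (0:ℚ) 0 u
      rwa [show ((0:ℚ) + 0) = 0 from add_zero 0] at h
    have e : ((0:ℚ) • tmk u) + ((0:ℚ) • tmk u) = ((0:ℚ) • tmk u) + 0 := by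
      rw [add_zero]
      exact (tmk_sound e0).symm
    exact add_left_cancel e

instance : NonUnitalCommRing (TQ X) :=
  { (inferInstance : AddCommGroup (TQ X)) with
    mul := (· * ·)
    left_distrib := fun a b c => by
      refine Quotient.inductionOn₃ a b c fun u v w => ?_
      exact tmk_sound ((TEq.mul_comm u _).trans ((TEq.mul_addl v w u).trans
        (TEq.add_congr (TEq.mul_comm v u) (TEq.mul_comm w u))))
    right_distrib := fun a b c => by
      refine Quotient.inductionOn₃ a b c fun u v w => ?_
      exact tmk_sound (TEq.mul_addl u v w)
    zero_mul := fun a => by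
      refine Quotient.inductionOn a fun u => ?_
      have e : ((0 : TQ X) * tmk u) + ((0 : TQ X) * tmk u) = ((0 : TQ X) * tmk u) + 0 := by
        rw [add_zero]
        exact (tmk_sound ((TEq.mul_congr (TEq.add_zero .zero).symm (TEq.refl u)).trans
          (TEq.mul_addl .zero .zero u))).symm
      exact add_left_cancel e
    mul_zero := fun a => by
      refine Quotient.inductionOn a fun u => ?_
      have e : (tmk u * (0 : TQ X)) + (tmk u * (0 : TQ X)) = (tmk u * (0 : TQ X)) + 0 := by
        rw [add_zero]
        refine (tmk_sound ?_).symm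
        exact (TEq.mul_congr (TEq.refl u) (TEq.add_zero .zero).symm).trans
          ((TEq.mul_comm u _).trans ((TEq.mul_addl .zero .zero u).trans
            (TEq.add_congr (TEq.mul_comm .zero u) (TEq.mul_comm .zero u))))
      exact add_left_cancel e
    mul_assoc := fun a b c => by
      refine Quotient.inductionOn₃ a b c fun u v w => ?_
      exact tmk_sound (TEq.mul_assoc u v w)
    mul_comm := fun a b => by
      refine Quotient.inductionOn₂ a b fun u v => ?_
      exact tmk_sound (TEq.mul_comm u v) }

instance : SMulCommClass ℚ (TQ X) (TQ X) where
  smul_comm c a b := by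
    refine Quotient.inductionOn₂ a b fun u v => ?_
    refine (tmk_sound ?_ : tmk (.smul c (.mul u v)) = tmk (.mul u (.smul c v)))
    exact ((TEq.smul_congr c (TEq.mul_comm u v)).trans
      ((TEq.mul_smull c v u).symm.trans (TEq.mul_comm _ u))).symm.symm

instance : IsScalarTower ℚ (TQ X) (TQ X) where
  smul_assoc c a b := by
    refine Quotient.inductionOn₂ a b fun u v => ?_
    exact tmk_sound (TEq.mul_smull c u v)

/-- Completeness of the congruence axioms for polynomial semantics. -/
theorem teq_of_evalA {u v : Term X}
    (h : u.evalA (fun x => (MvPolynomial.X x : MvPolynomial X ℚ)) =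
         v.evalA fun x => (MvPolynomial.X x : MvPolynomial X ℚ)) : TEq u v := by
  let Φ : MvPolynomial X ℚ →ₐ[ℚ] Unitization ℚ (TQ X) :=
    MvPolynomial.aeval fun x => (Unitization.inr (tmk (Term.var x)))
  have key : ∀ w : Term X, Φ (w.evalA fun x => (MvPolynomial.X x : MvPolynomial X ℚ))
      = Unitization.inr (tmk w) := by
    intro w
    induction w with
    | var x => simp [Term.evalA, Φ]
    | zero =>
      rw [Term.evalA, map_zero, show tmk (X := X) .zero = 0 from rfl, Unitization.inr_zero]
    | smul c u ih => rw [Term.evalA, map_smul, ih, ← Unitization.inr_smul, tmk_smul]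
    | add u v ih1 ih2 => rw [Term.evalA, map_add, ih1, ih2, ← Unitization.inr_add, tmk_add]
    | mul u v ih1 ih2 => rw [Term.evalA, map_mul, ih1, ih2, ← Unitization.inr_mul, tmk_mul]
  have e : Unitization.inr (tmk u) = (Unitization.inr (tmk v) : Unitization ℚ (TQ X)) :=
    (key u).symm.trans ((congrArg Φ h).trans (key v))
  exact Quotient.exact (Unitization.inr_injective e)

theorem evalA_subst {R : Type} [CommRing R] [Algebra ℚ R] {Y : Type}
    (u : Term X) (σ : X → Term Y) (ρ : Y → R) :
    (u.subst σ).evalA ρ = u.evalA fun x => (σ x).evalA ρ := by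
  induction u with
  | var x => rfl
  | zero => rfl
  | smul c u ih => simp [Term.subst, Term.evalA, ih]
  | add u v ih1 ih2 => simp [Term.subst, Term.evalA, ih1, ih2]
  | mul u v ih1 ih2 => simp [Term.subst, Term.evalA, ih1, ih2]

theorem eval_evalA (u : Term X) (x : X → ℚ) :
    MvPolynomial.eval x (u.evalA fun i => (MvPolynomial.X i : MvPolynomial X ℚ)) =
      u.evalA x := by
  induction u with
  | var i => simp [Term.evalA]
  | zero => simp [Term.evalA]
  | smul c u ih => simp [Term.evalA, MvPolynomial.smul_eval, ih, smul_eq_mul]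
  | add u v ih1 ih2 => simp [Term.evalA, ih1, ih2]
  | mul u v ih1 ih2 => simp [Term.evalA, ih1, ih2]

end Completeness


/-- **Bilinear form of additive product rules.** If `P` satisfies left and right
additivity, then `P ≈ α·(x*y) + β₁·(x*ẏ) + β₂·(ẋ*y) + γ·(ẋ*ẏ)` for some rationals.
Variables: `x = 0, ẋ = 1, y = 2, ẏ = 3` and (over `Fin 6`) `z = 4, ż = 5`. -/
theorem bilinear_form (P : Term (Fin 4))
    (hladd : TEq
      (P.subst (![.add (.var 0) (.var 2), .add (.var 1) (.var 3), .var 4, .var 5] :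
        Fin 4 → Term (Fin 6)))
      (.add (P.subst (![.var 0, .var 1, .var 4, .var 5] : Fin 4 → Term (Fin 6)))
            (P.subst (![.var 2, .var 3, .var 4, .var 5] : Fin 4 → Term (Fin 6)))))
    (hradd : TEq
      (P.subst (![.var 0, .var 1, .add (.var 2) (.var 4), .add (.var 3) (.var 5)] :
        Fin 4 → Term (Fin 6)))
      (.add (P.subst (![.var 0, .var 1, .var 2, .var 3] : Fin 4 → Term (Fin 6)))
            (P.subst (![.var 0, .var 1, .var 4, .var 5] : Fin 4 → Term (Fin 6))))) :
    ∃ a b1 b2 c : ℚ,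
      TEq P (.add (.smul a (.mul (.var 0) (.var 2)))
        (.add (.smul b1 (.mul (.var 0) (.var 3)))
          (.add (.smul b2 (.mul (.var 1) (.var 2)))
            (.smul c (.mul (.var 1) (.var 3)))))) := by
  -- Left additivity at the level of rational evaluations
  have L : ∀ x xd y yd z zd : ℚ,
      Term.evalA P ![x + y, xd + yd, z, zd] =
        Term.evalA P ![x, xd, z, zd] + Term.evalA P ![y, yd, z, zd] := by
    intro x xd y yd z zd
    have h := hladd.evalA_eq (R := ℚ) ![x, xd, y, yd, z, zd]
    rw [Term.evalA, evalA_subst, evalA_subst, evalA_subst] at h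
    have e1 : (fun i => Term.evalA
        ((![.add (.var 0) (.var 2), .add (.var 1) (.var 3), .var 4, .var 5] :
          Fin 4 → Term (Fin 6)) i) ![x, xd, y, yd, z, zd]) = ![x + y, xd + yd, z, zd] := by
      funext i; fin_cases i <;> (try simp [Term.evalA]) <;> rfl
    have e2 : (fun i => Term.evalA
        ((![.var 0, .var 1, .var 4, .var 5] : Fin 4 → Term (Fin 6)) i)
          ![x, xd, y, yd, z, zd]) = ![x, xd, z, zd] := by
      funext i; fin_cases i <;> (try simp [Term.evalA]) <;> rfl
    have e3 : (fun i => Term.evalA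
        ((![.var 2, .var 3, .var 4, .var 5] : Fin 4 → Term (Fin 6)) i)
          ![x, xd, y, yd, z, zd]) = ![y, yd, z, zd] := by
      funext i; fin_cases i <;> (try simp [Term.evalA]) <;> rfl
    rw [e1, e2, e3] at h
    exact h
  -- Right additivity
  have Rr : ∀ x xd y yd z zd : ℚ,
      Term.evalA P ![x, xd, y + z, yd + zd] =
        Term.evalA P ![x, xd, y, yd] + Term.evalA P ![x, xd, z, zd] := by
    intro x xd y yd z zd
    have h := hradd.evalA_eq (R := ℚ) ![x, xd, y, yd, z, zd]
    rw [Term.evalA, evalA_subst, evalA_subst, evalA_subst] at h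
    have e1 : (fun i => Term.evalA
        ((![.var 0, .var 1, .add (.var 2) (.var 4), .add (.var 3) (.var 5)] :
          Fin 4 → Term (Fin 6)) i) ![x, xd, y, yd, z, zd]) = ![x, xd, y + z, yd + zd] := by
      funext i; fin_cases i <;> (try simp [Term.evalA]) <;> rfl
    have e2 : (fun i => Term.evalA
        ((![.var 0, .var 1, .var 2, .var 3] : Fin 4 → Term (Fin 6)) i)
          ![x, xd, y, yd, z, zd]) = ![x, xd, y, yd] := by
      funext i; fin_cases i <;> (try simp [Term.evalA]) <;> rfl
    have e3 : (fun i => Term.evalA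
        ((![.var 0, .var 1, .var 4, .var 5] : Fin 4 → Term (Fin 6)) i)
          ![x, xd, y, yd, z, zd]) = ![x, xd, z, zd] := by
      funext i; fin_cases i <;> (try simp [Term.evalA]) <;> rfl
    rw [e1, e2, e3] at h
    exact h
  -- Scaling in the left pair
  have Sc : ∀ c x xd y yd : ℚ,
      Term.evalA P ![c * x, c * xd, y, yd] = c * Term.evalA P ![x, xd, y, yd] := by
    intro c x xd y yd
    have key := map_rat_smul (AddMonoidHom.mk'
      (fun t => Term.evalA P ![t * x, t * xd, y, yd])
      (fun s t => by simpa [_root_.add_mul] using L (s * x) (s * xd) (t * x) (t * xd) y yd)) c 1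
    simpa using key
  -- Scaling in the right pair
  have ScR : ∀ c x xd y yd : ℚ,
      Term.evalA P ![x, xd, c * y, c * yd] = c * Term.evalA P ![x, xd, y, yd] := by
    intro c x xd y yd
    have key := map_rat_smul (AddMonoidHom.mk'
      (fun t => Term.evalA P ![x, xd, t * y, t * yd])
      (fun s t => by simpa [_root_.add_mul] using Rr x xd (s * y) (s * yd) (t * y) (t * yd))) c 1
    simpa using key
  refine ⟨Term.evalA P ![1, 0, 1, 0], Term.evalA P ![1, 0, 0, 1],
    Term.evalA P ![0, 1, 1, 0], Term.evalA P ![0, 1, 0, 1], ?_⟩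
  have key4 : ∀ x xd y yd : ℚ,
      Term.evalA P ![x, xd, y, yd] =
        Term.evalA P ![1, 0, 1, 0] * (x * y) + Term.evalA P ![1, 0, 0, 1] * (x * yd) +
          Term.evalA P ![0, 1, 1, 0] * (xd * y) + Term.evalA P ![0, 1, 0, 1] * (xd * yd) := by
    intro x xd y yd
    have d1 : Term.evalA P ![x, xd, y, yd] =
        Term.evalA P ![x, 0, y, yd] + Term.evalA P ![0, xd, y, yd] := by
      simpa using L x 0 0 xd y yd
    have s1 : Term.evalA P ![x, 0, y, yd] = x * Term.evalA P ![1, 0, y, yd] := by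
      simpa using Sc x 1 0 y yd
    have s2 : Term.evalA P ![0, xd, y, yd] = xd * Term.evalA P ![0, 1, y, yd] := by
      simpa using Sc xd 0 1 y yd
    have d2 : ∀ u v : ℚ, Term.evalA P ![u, v, y, yd] =
        Term.evalA P ![u, v, y, 0] + Term.evalA P ![u, v, 0, yd] := fun u v => by
      simpa using Rr u v y 0 0 yd
    have t1 : ∀ u v : ℚ, Term.evalA P ![u, v, y, 0] = y * Term.evalA P ![u, v, 1, 0] :=
      fun u v => by simpa using ScR y u v 1 0
    have t2 : ∀ u v : ℚ, Term.evalA P ![u, v, 0, yd] = yd * Term.evalA P ![u, v, 0, 1] :=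
      fun u v => by simpa using ScR yd u v 0 1
    rw [d1, s1, s2, d2 1 0, d2 0 1, t1 1 0, t1 0 1, t2 1 0, t2 0 1]
    ring
  refine teq_of_evalA (MvPolynomial.funext fun x => ?_)
  rw [eval_evalA, eval_evalA]
  have hx : x = ![x 0, x 1, x 2, x 3] := by
    funext i; fin_cases i <;> rfl
  conv_lhs => rw [hx]
  rw [key4 (x 0) (x 1) (x 2) (x 3)]
  simp only [Term.evalA, smul_eq_mul]
  ring


end PSeries
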